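/- arXiv:1201.0690 — 2 statements merged into one kernel-verified Lean document; each statement's English description precedes it below -/
import Mathlib

section
/- For every smooth biperiodic field H : Ω̄ → ℂ³ with H₃ = 0 on Γ₀, one has ∫_Ω ( |curl_α H|² + |div_α H|² ) dx = ∫_Ω |∇_α H|² dx + 2 Re ∫_{Γ_h} ( conj(H₃) ∂^α H₁/∂x₁ + conj(H₃) ∂^α H₂/∂x₂ ) ds, where |∇_α H|² = Σ_{j=1}^{3} |∇_α H_j|². -/
open MeasureTheory Real

noncomputable section

abbrev R3 : Type := Fin 3 → ℝ
abbrev C3 : Type := Fin 3 → ℂ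

/-- Partial derivative of a complex-valued function on `ℝ³`. -/
def pdC (i : Fin 3) (f : R3 → ℂ) (x : R3) : ℂ := fderiv ℝ f x (Pi.single i 1)

/-- Partial derivative of a real-valued function on `ℝ³`. -/
def pdR (i : Fin 3) (f : R3 → ℝ) (x : R3) : ℝ := fderiv ℝ f x (Pi.single i 1)

/-- The shifted partial derivative `∂^α f/∂x_i = ∂f/∂x_i + i α_i f`. -/
def pdA (α : R3) (i : Fin 3) (f : R3 → ℂ) (x : R3) : ℂ :=
  pdC i f x + Complex.I * (α i : ℂ) * f x

/-- Componentwise partial derivative of a vector field. -/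
def pdV (i : Fin 3) (F : R3 → C3) (x : R3) : C3 := fun j => pdC i (fun y => F y j) x

def realToC3 (a : R3) : C3 := fun i => (a i : ℂ)

/-- Cross product of complex 3-vectors. -/
def crossC (a b : C3) : C3 :=
  ![a 1 * b 2 - a 2 * b 1, a 2 * b 0 - a 0 * b 2, a 0 * b 1 - a 1 * b 0]

/-- Cross product of real 3-vectors. -/
def crossR (a b : R3) : R3 :=
  ![a 1 * b 2 - a 2 * b 1, a 2 * b 0 - a 0 * b 2, a 0 * b 1 - a 1 * b 0]

/-- The unit vector `e₃ = (0,0,1)` as a complex vector. -/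
def e3 : C3 := ![0, 0, 1]

/-- `ã = (a₁,a₂,−a₃)`. -/
def tld (a : R3) : R3 := ![a 0, a 1, -(a 2)]

/-- The curl of a complex vector field on `ℝ³`. -/
def curlF (F : R3 → C3) (x : R3) : C3 :=
  ![pdC 1 (fun y => F y 2) x - pdC 2 (fun y => F y 1) x,
    pdC 2 (fun y => F y 0) x - pdC 0 (fun y => F y 2) x,
    pdC 0 (fun y => F y 1) x - pdC 1 (fun y => F y 0) x]

/-- `curl_α F = curl F + i α × F`. -/
def curlA (α : R3) (F : R3 → C3) (x : R3) : C3 :=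
  curlF F x + Complex.I • crossC (realToC3 α) (F x)

/-- The divergence of a complex vector field. -/
def divFld (F : R3 → C3) (x : R3) : ℂ := ∑ i, pdC i (fun y => F y i) x

/-- `div_α F = div F + i α · F`. -/
def divA (α : R3) (F : R3 → C3) (x : R3) : ℂ :=
  divFld F x + Complex.I * ∑ i, (α i : ℂ) * F x i

/-- Squared Euclidean norm of a complex 3-vector. -/
def nsq (v : C3) : ℝ := ∑ i, Complex.normSq (v i)

/-- `a · conj b` for complex 3-vectors. -/
def dotc (a b : C3) : ℂ := ∑ i, a i * (starRingEnd ℂ) (b i)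

/-- Plain (bilinear) dot product of complex 3-vectors. -/
def dotp (a b : C3) : ℂ := ∑ i, a i * b i

/-- Componentwise complex conjugate of a vector. -/
def conjV (v : C3) : C3 := fun i => (starRingEnd ℂ) (v i)

/-- Transverse part `(v₁, v₂, 0)` of a vector. -/
def vecT (v : C3) : C3 := ![v 0, v 1, 0]

/-- The periodicity cell `Ω = (0,2π)² × (0,h)`. -/
def Omg (h : ℝ) : Set R3 :=
  {x | x 0 ∈ Set.Ioo 0 (2 * π) ∧ x 1 ∈ Set.Ioo 0 (2 * π) ∧ x 2 ∈ Set.Ioo 0 h}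

/-- The square `(0,2π)²` parametrizing the horizontal boundary faces. -/
def sq2 : Set (ℝ × ℝ) := Set.Ioo 0 (2 * π) ×ˢ Set.Ioo 0 (2 * π)

/-- The point `(p₁, p₂, t) ∈ ℝ³`. -/
def bpt (p : ℝ × ℝ) (t : ℝ) : R3 := ![p.1, p.2, t]

/-- `2π`-periodicity in the first two variables. -/
def Biperiodic {E : Type*} (f : R3 → E) : Prop :=
  ∀ x : R3, f (x + (2 * π) • (Pi.single 0 1 : R3)) = f x ∧ f (x + (2 * π) • (Pi.single 1 1 : R3)) = f x

/-- Fourier coefficient of order `n ∈ ℤ²` of `H(·,·,t)` on the square `(0,2π)²`. -/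
def fcoeff (H : R3 → C3) (n : ℤ × ℤ) (t : ℝ) : C3 := fun j =>
  (1 / (4 * (π : ℂ) ^ 2)) *
    ∫ p in sq2, H (bpt p t) j *
      Complex.exp (-Complex.I * (((n.1 : ℝ) * p.1 + (n.2 : ℝ) * p.2 : ℝ) : ℂ))

/-- `β_n = √(k²−|n+α|²)` if `k² ≥ |n+α|²`, and `i √(|n+α|²−k²)` otherwise. -/
def betaN (k : ℝ) (α : R3) (n : ℤ × ℤ) : ℂ :=
  if ((n.1 : ℝ) + α 0) ^ 2 + ((n.2 : ℝ) + α 1) ^ 2 ≤ k ^ 2 then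
    ((Real.sqrt (k ^ 2 - (((n.1 : ℝ) + α 0) ^ 2 + ((n.2 : ℝ) + α 1) ^ 2)) : ℝ) : ℂ)
  else
    Complex.I * ((Real.sqrt ((((n.1 : ℝ) + α 0) ^ 2 + ((n.2 : ℝ) + α 1) ^ 2) - k ^ 2) : ℝ) : ℂ)

/-- The exterior Dirichlet-to-Neumann operator `T_α` applied to the `j`-th component of
the trace of `H` on `Γ_h`, evaluated at the boundary point `(p₁,p₂,h)`. -/
def Talpha (k : ℝ) (α : R3) (H : R3 → C3) (h : ℝ) (j : Fin 3) (p : ℝ × ℝ) : ℂ :=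
  ∑' n : ℤ × ℤ, Complex.I * betaN k α n * fcoeff H n h j *
    Complex.exp (Complex.I * (((n.1 : ℝ) * p.1 + (n.2 : ℝ) * p.2 : ℝ) : ℂ))

/-- Standing hypotheses on `ε_r⁻¹`: `C¹`, biperiodic, positive and bounded away from
zero, and equal to `1` near `Γ_h`. -/
structure EpsOK (h : ℝ) (εinv : R3 → ℝ) : Prop where
  smooth : ContDiff ℝ 1 εinv
  periodic : Biperiodic εinv
  pos : ∃ c : ℝ, 0 < c ∧ ∀ x, c ≤ εinv x
  one_near_top : ∃ η : ℝ, 0 < η ∧ η < h ∧ ∀ x : R3, h - η < x 2 → εinv x = 1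

/-- A homogeneous radiating solution of the biperiodic scattering problem. -/
structure IsHomSol (h k : ℝ) (α : R3) (εinv : R3 → ℝ) (H : R3 → C3) : Prop where
  smooth : ContDiff ℝ 2 H
  periodic : Biperiodic H
  maxwell : ∀ x ∈ Omg h, curlA α (fun y => (εinv y : ℂ) • curlA α H y) x = (k ^ 2 : ℂ) • H x
  divfree : ∀ x ∈ Omg h, divA α H x = 0
  bc_normal : ∀ x : R3, x 2 = 0 → H x 2 = 0
  bc_tangential : ∀ x : R3, x 2 = 0 → crossC e3 ((εinv x : ℂ) • curlA α H x) = 0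
  radiation : ∀ n : ℤ × ℤ, ∀ j : Fin 3,
    deriv (fun t => fcoeff H n t j) h = Complex.I * betaN k α n * fcoeff H n h j

/-- The non-trapping assumptions (a), (b), (c) on `ε_r⁻¹`. -/
def NonTrapping (h : ℝ) (εinv : R3 → ℝ) : Prop :=
  (∀ x ∈ Omg h, pdR 2 εinv x ≤ 0) ∧
  (∃ U : Set R3, IsOpen U ∧ U.Nonempty ∧ U ⊆ Omg h ∧ ∀ x ∈ U, pdR 2 εinv x < 0) ∧
  (∃ δ : ℝ, 1 / 2 < δ ∧ ∃ Mt Mz : ℝ,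
    (∀ x ∈ Omg h, (pdR 0 εinv x) ^ 2 + (pdR 1 εinv x) ^ 2 ≤ Mt ^ 2) ∧
    (∀ x ∈ Omg h, |pdR 2 εinv x| ≤ Mz) ∧
    δ / 2 * Mt ^ 2 + Real.sqrt 2 / h * Mz < 2 / h ^ 2)

section Helpers

variable {f g : R3 → ℂ} {x : R3} {i : Fin 3}

lemma contDiff_pdC (hf : ContDiff ℝ (⊤ : ℕ∞) f) (i : Fin 3) : ContDiff ℝ (⊤ : ℕ∞) (pdC i f) := by
  have h1 : ContDiff ℝ (⊤ : ℕ∞) (fderiv ℝ f) := hf.fderiv_right (by simp)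
  exact (ContinuousLinearMap.apply ℝ ℂ (Pi.single i 1)).contDiff.comp h1

lemma diffAt_of_sm (hf : ContDiff ℝ (⊤ : ℕ∞) f) : DifferentiableAt ℝ f x :=
  (hf.differentiable (by simp)).differentiableAt

lemma pdC_comm (hf : ContDiff ℝ (⊤ : ℕ∞) f) (x : R3) (i j : Fin 3) :
    pdC i (pdC j f) x = pdC j (pdC i f) x := by
  have hd : DifferentiableAt ℝ (fderiv ℝ f) x :=
    ((hf.fderiv_right (m := (⊤ : ℕ∞)) (by simp)).differentiable (by simp)).differentiableAt
  have hsym := (hf.contDiffAt (x := x)).isSymmSndFDerivAt (by rw [minSmoothness_of_isRCLikeNormedField]; exact WithTop.coe_le_coe.2 (le_top : (2:ℕ∞) ≤ ⊤))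
  have key : ∀ k l : Fin 3, pdC k (pdC l f) x
      = fderiv ℝ (fderiv ℝ f) x (Pi.single k 1) (Pi.single l 1) := by
    intro k l
    have : pdC l f = fun y => (fderiv ℝ f y) (Pi.single l 1) := rfl
    rw [pdC, this, fderiv_clm_apply hd (differentiableAt_const _)]
    simp
  rw [key, key, hsym]

lemma pdC_add (hf : DifferentiableAt ℝ f x) (hg : DifferentiableAt ℝ g x) :
    pdC i (fun y => f y + g y) x = pdC i f x + pdC i g x := by
  simp [pdC, fderiv_fun_add hf hg]

lemma pdC_sub (hf : DifferentiableAt ℝ f x) (hg : DifferentiableAt ℝ g x) :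
    pdC i (fun y => f y - g y) x = pdC i f x - pdC i g x := by
  simp [pdC, fderiv_fun_sub hf hg]

lemma pdC_mul (hf : DifferentiableAt ℝ f x) (hg : DifferentiableAt ℝ g x) :
    pdC i (fun y => f y * g y) x = pdC i f x * g x + f x * pdC i g x := by
  simp [pdC, fderiv_fun_mul hf hg]; ring

lemma pdC_const_mul (hf : DifferentiableAt ℝ f x) (c : ℂ) :
    pdC i (fun y => c * f y) x = c * pdC i f x := by
  simp [pdC, fderiv_const_mul hf c]

lemma pdC_conj (hf : DifferentiableAt ℝ f x) :
    pdC i (fun y => (starRingEnd ℂ) (f y)) x = (starRingEnd ℂ) (pdC i f x) := by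
  have hL := (Complex.conjCLE.toContinuousLinearMap.hasFDerivAt (x := f x)).comp x hf.hasFDerivAt
  have : (fun y => (starRingEnd ℂ) (f y)) = (⇑Complex.conjCLE.toContinuousLinearMap ∘ f) := by
    funext y; simp
  rw [pdC, this, hL.fderiv]
  simp [pdC]

lemma pdC_sum {ι : Type*} (s : Finset ι) (F : ι → R3 → ℂ)
    (hF : ∀ j ∈ s, DifferentiableAt ℝ (F j) x) :
    pdC i (fun y => ∑ j ∈ s, F j y) x = ∑ j ∈ s, pdC i (F j) x := by
  simp [pdC, fderiv_fun_sum hF]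

lemma pdC_shift (hf : Differentiable ℝ f) (v : R3) (hv : ∀ y, f (y + v) = f y) (x : R3) :
    pdC i f (x + v) = pdC i f x := by
  have h1 : HasFDerivAt (fun y => f (y + v)) (fderiv ℝ f (x + v)) x :=
    (hf (x + v)).hasFDerivAt.comp x ((hasFDerivAt_id x).add_const v)
  have h2 : (fun y => f (y + v)) = f := funext hv
  rw [pdC, ← h1.fderiv]
  congr 1
  rw [h2]

end Helpers
section Helpers2

lemma insertNth_shift {n : ℕ} (i : Fin (n+1)) (c d : ℝ) (y : Fin n → ℝ) :
    i.insertNth c y = i.insertNth d y + (c - d) • (Pi.single i 1 : Fin (n+1) → ℝ) := by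
  funext j
  by_cases hj : j = i
  · subst hj; simp
  · obtain ⟨m, rfl⟩ := Fin.exists_succAbove_eq hj
    simp [Pi.single_eq_of_ne (Fin.succAbove_ne i m)]

lemma pdC_zero_on_plane {f : R3 → ℂ} (hf : ContDiff ℝ (⊤ : ℕ∞) f)
    (hvan : ∀ y : R3, y 2 = 0 → f y = 0) {i : Fin 3} (hi : i ≠ 2)
    {x : R3} (hx : x 2 = 0) : pdC i f x = 0 := by
  set v : R3 := Pi.single i 1 with hv
  have hcurve : HasDerivAt (fun t : ℝ => x + t • v) v 0 := by
    simpa using ((hasDerivAt_id (0:ℝ)).smul_const v).const_add x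
  have h1 : HasDerivAt (fun t : ℝ => f (x + t • v)) (fderiv ℝ f x v) 0 := by
    have hfd : HasFDerivAt f (fderiv ℝ f x) (x + (0:ℝ) • v) := by
      simpa using (diffAt_of_sm hf (x := x)).hasFDerivAt
    exact hfd.comp_hasDerivAt 0 hcurve
  have h2 : (fun t : ℝ => f (x + t • v)) = fun _ => (0:ℂ) := by
    funext t
    apply hvan
    have : v 2 = 0 := by rw [hv]; exact Pi.single_eq_of_ne (Ne.symm hi) 1
    simp [this, hx]
  rw [h2] at h1
  have := h1.unique (hasDerivAt_const 0 (0:ℂ))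
  simpa [pdC] using this

end Helpers2
/-- The auxiliary field `W_j = ∑_i (conj H_j ∂ᵅ_i H_i − conj H_i ∂ᵅ_i H_j)`. -/
def Wf (α : R3) (H : R3 → C3) (j : Fin 3) (y : R3) : ℂ :=
  ∑ i, ((starRingEnd ℂ) (H y j) * pdA α i (fun z => H z i) y
      - (starRingEnd ℂ) (H y i) * pdA α i (fun z => H z j) y)

section Main

variable {α : R3} {H : R3 → C3}

lemma smHc (hs : ContDiff ℝ (⊤ : ℕ∞) H) (j : Fin 3) : ContDiff ℝ (⊤ : ℕ∞) fun y => H y j :=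
  contDiff_pi.1 hs j

lemma smConj {f : R3 → ℂ} (hf : ContDiff ℝ (⊤ : ℕ∞) f) :
    ContDiff ℝ (⊤ : ℕ∞) fun y => (starRingEnd ℂ) (f y) :=
  Complex.conjCLE.toContinuousLinearMap.contDiff.comp hf

lemma smPdA {f : R3 → ℂ} (hf : ContDiff ℝ (⊤ : ℕ∞) f) (α : R3) (i : Fin 3) :
    ContDiff ℝ (⊤ : ℕ∞) fun y => pdA α i f y :=
  (contDiff_pdC hf i).add (contDiff_const.mul hf)

lemma smW (hs : ContDiff ℝ (⊤ : ℕ∞) H) (j : Fin 3) : ContDiff ℝ (⊤ : ℕ∞) (Wf α H j) := by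
  refine ContDiff.sum fun i _ => ContDiff.sub ?_ ?_
  · exact (smConj (smHc hs j)).mul (smPdA (smHc hs i) α i)
  · exact (smConj (smHc hs i)).mul (smPdA (smHc hs j) α i)

lemma pdC_pdA {f : R3 → ℂ} (hf : ContDiff ℝ (⊤ : ℕ∞) f) (k i : Fin 3) (x : R3) :
    pdC k (fun y => pdA α i f y) x
      = pdC k (pdC i f) x + Complex.I * (α i : ℂ) * pdC k f x := by
  have h1 : (fun y => pdA α i f y)
      = fun y => pdC i f y + Complex.I * (α i : ℂ) * f y := rfl
  rw [h1, pdC_add (diffAt_of_sm (contDiff_pdC hf i))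
    (diffAt_of_sm (contDiff_const.mul hf)), pdC_const_mul (diffAt_of_sm hf)]

lemma pdC_Wf (hs : ContDiff ℝ (⊤ : ℕ∞) H) (k j : Fin 3) (x : R3) :
    pdC k (Wf α H j) x
      = ∑ i, ((starRingEnd ℂ) (pdC k (fun y => H y j) x) * pdA α i (fun y => H y i) x
          + (starRingEnd ℂ) (H x j) *
            (pdC k (pdC i (fun y => H y i)) x
              + Complex.I * (α i : ℂ) * pdC k (fun y => H y i) x)
          - ((starRingEnd ℂ) (pdC k (fun y => H y i) x) * pdA α i (fun y => H y j) x
          + (starRingEnd ℂ) (H x i) *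
            (pdC k (pdC i (fun y => H y j)) x
              + Complex.I * (α i : ℂ) * pdC k (fun y => H y j) x))) := by
  have hW : Wf α H j = fun y => ∑ i : Fin 3,
      (fun i y => (starRingEnd ℂ) (H y j) * pdA α i (fun z => H z i) y
      - (starRingEnd ℂ) (H y i) * pdA α i (fun z => H z j) y) i y := rfl
  have hd1 : ∀ i j : Fin 3, DifferentiableAt ℝ
      (fun y => (starRingEnd ℂ) (H y j) * pdA α i (fun z => H z i) y
        - (starRingEnd ℂ) (H y i) * pdA α i (fun z => H z j) y) x := by
    intro i j
    exact diffAt_of_sm (((smConj (smHc hs j)).mul (smPdA (smHc hs i) α i)).sub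
      ((smConj (smHc hs i)).mul (smPdA (smHc hs j) α i)))
  rw [hW, pdC_sum Finset.univ _ (fun i _ => hd1 i j)]
  refine Finset.sum_congr rfl fun i _ => ?_
  rw [pdC_sub (diffAt_of_sm ((smConj (smHc hs j)).mul (smPdA (smHc hs i) α i)))
      (diffAt_of_sm ((smConj (smHc hs i)).mul (smPdA (smHc hs j) α i))),
    pdC_mul (diffAt_of_sm (smConj (smHc hs j))) (diffAt_of_sm (smPdA (smHc hs i) α i)),
    pdC_mul (diffAt_of_sm (smConj (smHc hs i))) (diffAt_of_sm (smPdA (smHc hs j) α i)),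
    pdC_conj (diffAt_of_sm (smHc hs j)), pdC_conj (diffAt_of_sm (smHc hs i)),
    pdC_pdA (smHc hs i) k i, pdC_pdA (smHc hs j) k i]

end Main
section Main2

variable {α : R3} {H : R3 → C3}

lemma pointwise_id (hs : ContDiff ℝ (⊤ : ℕ∞) H) (x : R3) :
    ((nsq (curlA α H x) + Complex.normSq (divA α H x) : ℝ) : ℂ)
      = ((∑ j, ∑ i, Complex.normSq (pdA α i (fun y => H y j) x) : ℝ) : ℂ)
        + ∑ j, pdC j (Wf α H j) x := by
  have hsym : ∀ (a b c : Fin 3),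
      pdC a (pdC b (fun y => H y c)) x = pdC b (pdC a (fun y => H y c)) x :=
    fun a b c => pdC_comm (smHc hs c) x a b
  have hns : ∀ z : ℂ, ((Complex.normSq z : ℝ) : ℂ) = z * (starRingEnd ℂ) z :=
    fun z => (Complex.mul_conj z).symm
  push_cast [nsq, Fin.sum_univ_three]
  simp only [Fin.sum_univ_three, pdC_Wf hs, curlA, curlF, crossC, realToC3, divA, divFld, pdA,
    Pi.add_apply, Pi.smul_apply, smul_eq_mul, Matrix.cons_val_zero, Matrix.cons_val_one,
    Matrix.head_cons, Matrix.cons_val_two, Matrix.tail_cons, hns,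
    map_add, map_sub, map_mul, Complex.conj_conj, Complex.conj_I, Complex.conj_ofReal,
    hsym 1 0, hsym 2 0, hsym 2 1]
  ring

end Main2
/-- `B = conj H₃ (∂ᵅ₁H₁ + ∂ᵅ₂H₂)`, the boundary integrand. -/
def Bf (α : R3) (H : R3 → C3) (x : R3) : ℂ :=
  (starRingEnd ℂ) (H x 2) * pdA α 0 (fun y => H y 0) x
    + (starRingEnd ℂ) (H x 2) * pdA α 1 (fun y => H y 1) x

/-- `g_i = conj H_i · H₃`. -/
def gD (H : R3 → C3) (i : Fin 3) (x : R3) : ℂ := (starRingEnd ℂ) (H x i) * H x 2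

section Main3

variable {α : R3} {H : R3 → C3}

lemma smB (hs : ContDiff ℝ (⊤ : ℕ∞) H) : ContDiff ℝ (⊤ : ℕ∞) (Bf α H) :=
  ((smConj (smHc hs 2)).mul (smPdA (smHc hs 0) α 0)).add
    ((smConj (smHc hs 2)).mul (smPdA (smHc hs 1) α 1))

lemma smgD (hs : ContDiff ℝ (⊤ : ℕ∞) H) (i : Fin 3) : ContDiff ℝ (⊤ : ℕ∞) (gD H i) :=
  (smConj (smHc hs i)).mul (smHc hs 2)

lemma pdC_gD (hs : ContDiff ℝ (⊤ : ℕ∞) H) (k i : Fin 3) (x : R3) :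
    pdC k (gD H i) x = (starRingEnd ℂ) (pdC k (fun y => H y i) x) * H x 2
      + (starRingEnd ℂ) (H x i) * pdC k (fun y => H y 2) x := by
  have h1 : gD H i = fun y => (starRingEnd ℂ) (H y i) * H y 2 := rfl
  rw [h1, pdC_mul (diffAt_of_sm (smConj (smHc hs i))) (diffAt_of_sm (smHc hs 2)),
    pdC_conj (diffAt_of_sm (smHc hs i))]

lemma W2_split (hs : ContDiff ℝ (⊤ : ℕ∞) H) (x : R3) :
    Wf α H 2 x = Bf α H x + (starRingEnd ℂ) (Bf α H x)
      - pdC 0 (gD H 0) x - pdC 1 (gD H 1) x := by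
  simp only [Wf, Bf, Fin.sum_univ_three, pdA, pdC_gD hs,
    map_add, map_sub, map_mul, Complex.conj_conj, Complex.conj_I, Complex.conj_ofReal]
  ring

lemma W2_bottom (hs : ContDiff ℝ (⊤ : ℕ∞) H) (hbc : ∀ x : R3, x 2 = 0 → H x 2 = 0)
    {x : R3} (hx : x 2 = 0) : Wf α H 2 x = 0 := by
  have h2 := hbc x hx
  have hp0 : pdC 0 (fun y => H y 2) x = 0 :=
    pdC_zero_on_plane (smHc hs 2) (fun y hy => hbc y hy) (by decide) hx
  have hp1 : pdC 1 (fun y => H y 2) x = 0 :=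
    pdC_zero_on_plane (smHc hs 2) (fun y hy => hbc y hy) (by decide) hx
  simp [Wf, Fin.sum_univ_three, pdA, h2, hp0, hp1]

lemma Wf_shift (hs : ContDiff ℝ (⊤ : ℕ∞) H) (v : R3) (hv : ∀ y, H (y + v) = H y) (j : Fin 3)
    (y : R3) : Wf α H j (y + v) = Wf α H j y := by
  have hpd : ∀ i k : Fin 3, pdC i (fun w => H w k) (y + v) = pdC i (fun w => H w k) y :=
    fun i k => pdC_shift ((smHc hs k).differentiable (by simp)) v
      (fun z => congrFun (hv z) k) y
  simp [Wf, pdA, hpd, hv y]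

lemma gD_shift (v : R3) (hv : ∀ y, H (y + v) = H y) (i : Fin 3) (y : R3) :
    gD H i (y + v) = gD H i y := by simp [gD, hv y]

end Main3
/-- Lower corner. -/
def a0 : R3 := fun _ => 0
/-- Upper corner. -/
def b0 (h : ℝ) : R3 := ![2*π, 2*π, h]

section Main4

variable {α : R3} {H : R3 → C3} {h : ℝ}

set_option maxHeartbeats 1000000 in
lemma main_div (hh : 0 < h) (hs : ContDiff ℝ (⊤ : ℕ∞) H) (hper : Biperiodic H)
    (hbc : ∀ x : R3, x 2 = 0 → H x 2 = 0) :
    (∫ x in Set.Icc a0 (b0 h), ∑ j, pdC j (Wf α H j) x)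
      = ∫ y in Set.Icc (fun _ => (0:ℝ) : Fin 2 → ℝ) (fun _ => 2*π),
          Wf α H 2 ((2 : Fin 3).insertNth h y) := by
  have hle : a0 ≤ b0 h := by
    intro i
    fin_cases i <;> simp [a0, b0] <;> positivity
  have hcont : Continuous fun x => ∑ j, pdC j (Wf α H j) x :=
    continuous_finset_sum _ (fun j _ => (contDiff_pdC (smW hs j) j).continuous)
  have key := integral_divergence_of_hasFDerivAt_off_countable' a0 (b0 h) hle
    (fun i => Wf α H i) (fun i x => fderiv ℝ (Wf α H i) x)
    ∅ Set.countable_empty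
    (fun i => (smW hs i).continuous.continuousOn)
    (fun x _ i => ((smW hs i).differentiable (by simp) x).hasFDerivAt)
    (by exact hcont.integrableOn_Icc)
  rw [show (fun x => ∑ i : Fin 3, fderiv ℝ (Wf α H i) x (Pi.single i 1))
      = fun x => ∑ j : Fin 3, pdC j (Wf α H j) x from rfl] at key
  rw [key, Fin.sum_univ_three]
  have hface0 : ∀ i : Fin 3, i ≠ 2 →
      (∫ x in Set.Icc (a0 ∘ Fin.succAbove i) (b0 h ∘ Fin.succAbove i),
          Wf α H i (i.insertNth (b0 h i) x))
        = ∫ x in Set.Icc (a0 ∘ Fin.succAbove i) (b0 h ∘ Fin.succAbove i),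
          Wf α H i (i.insertNth (a0 i) x) := by
    intro i hi
    refine setIntegral_congr_fun (measurableSet_Icc) fun x _ => ?_
    have hb : b0 h i = 2*π := by
      fin_cases i
      · rfl
      · rfl
      · exact absurd rfl hi
    have ha : a0 i = 0 := rfl
    have hv : ∀ y : R3, H (y + (2*π) • (Pi.single i 1 : R3)) = H y := by
      fin_cases i
      · exact fun y => (hper y).1
      · exact fun y => (hper y).2
      · exact absurd rfl hi
    have hshift := insertNth_shift i (2*π) 0 x
    rw [sub_zero] at hshift
    rw [hb, ha, hshift]
    exact Wf_shift hs _ hv i _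
  rw [hface0 0 (by decide), hface0 1 (by decide), sub_self, sub_self, zero_add, zero_add]
  have hbot : (∫ x in Set.Icc (a0 ∘ Fin.succAbove 2) (b0 h ∘ Fin.succAbove 2),
      Wf α H 2 ((2:Fin 3).insertNth (a0 2) x)) = 0 := by
    have hz : ∀ x : Fin 2 → ℝ, Wf α H 2 ((2:Fin 3).insertNth (a0 2) x) = 0 := by
      intro x
      exact W2_bottom hs hbc (by simp [a0])
    simp [hz]
  rw [hbot, sub_zero]
  have hfb : b0 h ∘ Fin.succAbove 2 = (fun _ => 2*π : Fin 2 → ℝ) := by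
    funext j; fin_cases j <;> rfl
  have hfa : a0 ∘ Fin.succAbove 2 = (fun _ => (0:ℝ) : Fin 2 → ℝ) := rfl
  have hb2 : b0 h 2 = h := rfl
  rw [hfb, hfa, hb2]

end Main4
/-- Embedding of the horizontal square at height `h`. -/
def emb (h : ℝ) (y : Fin 2 → ℝ) : R3 := ![y 0, y 1, h]

/-- Derivative of `emb`. -/
def L2 : (Fin 2 → ℝ) →L[ℝ] R3 :=
  ContinuousLinearMap.pi ![ContinuousLinearMap.proj 0, ContinuousLinearMap.proj 1, 0]

lemma emb_eq_insert (h : ℝ) (y : Fin 2 → ℝ) : (2 : Fin 3).insertNth h y = emb h y := by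
  funext j
  fin_cases j <;> rfl

lemma emb_hasFDeriv (h : ℝ) (y : Fin 2 → ℝ) : HasFDerivAt (emb h) L2 y := by
  have h1 : HasFDerivAt (fun y => (![0,0,h] : R3) + L2 y) L2 y := L2.hasFDerivAt.const_add _
  have h2 : emb h = fun y => (![0,0,h] : R3) + L2 y := by
    funext y j
    fin_cases j <;> simp [emb, L2, ContinuousLinearMap.pi_apply]
  rw [h2]
  exact h1

lemma sm_emb (h : ℝ) : ContDiff ℝ (⊤ : ℕ∞) (emb h) := by
  apply contDiff_pi.2
  intro j
  fin_cases j
  · exact (ContinuousLinearMap.proj (R := ℝ) (φ := fun _ : Fin 2 => ℝ) 0).contDiff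
  · exact (ContinuousLinearMap.proj (R := ℝ) (φ := fun _ : Fin 2 => ℝ) 1).contDiff
  · exact contDiff_const

lemma L2_single0 : L2 (Pi.single 0 1) = (Pi.single 0 1 : R3) := by
  funext j; fin_cases j <;> simp [L2, ContinuousLinearMap.pi_apply]

lemma L2_single1 : L2 (Pi.single 1 1) = (Pi.single 1 1 : R3) := by
  funext j; fin_cases j <;> simp [L2, ContinuousLinearMap.pi_apply]

lemma emb_shift0 (h : ℝ) (y : Fin 2 → ℝ) (c : ℝ) :
    emb h (y + c • (Pi.single 0 1 : Fin 2 → ℝ)) = emb h y + c • (Pi.single 0 1 : R3) := by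
  funext j; fin_cases j <;> simp [emb]

lemma emb_shift1 (h : ℝ) (y : Fin 2 → ℝ) (c : ℝ) :
    emb h (y + c • (Pi.single 1 1 : Fin 2 → ℝ)) = emb h y + c • (Pi.single 1 1 : R3) := by
  funext j; fin_cases j <;> simp [emb]

section Main5

variable {α : R3} {H : R3 → C3} {h : ℝ}

set_option maxHeartbeats 1000000 in
lemma corr_zero (hs : ContDiff ℝ (⊤ : ℕ∞) H) (hper : Biperiodic H) :
    (∫ y in Set.Icc (fun _ => (0:ℝ) : Fin 2 → ℝ) (fun _ => 2*π),
        (pdC 0 (gD H 0) (emb h y) + pdC 1 (gD H 1) (emb h y))) = 0 := by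
  set g2 : Fin 2 → R3 → ℂ := ![gD H 0, gD H 1] with hg2
  have hsm : ∀ i : Fin 2, ContDiff ℝ (⊤ : ℕ∞) (g2 i) := by
    intro i; fin_cases i
    · exact smgD hs 0
    · exact smgD hs 1
  have hle : (fun _ => (0:ℝ) : Fin 2 → ℝ) ≤ fun _ => 2*π := by
    intro i; positivity
  have hdiv : ∀ y : Fin 2 → ℝ,
      ∑ i : Fin 2, ((fderiv ℝ (g2 i) (emb h y)).comp L2) (Pi.single i 1)
        = pdC 0 (gD H 0) (emb h y) + pdC 1 (gD H 1) (emb h y) := by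
    intro y
    rw [Fin.sum_univ_two]
    simp only [ContinuousLinearMap.comp_apply, L2_single0, L2_single1]
    rfl
  have key := integral_divergence_of_hasFDerivAt_off_countable'
    (fun _ => (0:ℝ) : Fin 2 → ℝ) (fun _ => 2*π) hle
    (fun i y => g2 i (emb h y)) (fun i y => (fderiv ℝ (g2 i) (emb h y)).comp L2)
    ∅ Set.countable_empty
    (fun i => ((hsm i).continuous.comp (sm_emb h).continuous).continuousOn)
    (fun y _ i => ((diffAt_of_sm (hsm i)).hasFDerivAt).comp y (emb_hasFDeriv h y))
    (by
      refine Continuous.integrableOn_Icc ?_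
      have : (fun y => ∑ i : Fin 2, ((fderiv ℝ (g2 i) (emb h y)).comp L2) (Pi.single i 1))
          = fun y => pdC 0 (gD H 0) (emb h y) + pdC 1 (gD H 1) (emb h y) := funext hdiv
      rw [this]
      exact ((contDiff_pdC (smgD hs 0) 0).continuous.comp (sm_emb h).continuous).add
        ((contDiff_pdC (smgD hs 1) 1).continuous.comp (sm_emb h).continuous))
  rw [funext hdiv] at key
  rw [key]
  have hp0 : ∀ x : Fin 1 → ℝ,
      g2 0 (emb h ((0:Fin 2).insertNth (2*π) x)) = g2 0 (emb h ((0:Fin 2).insertNth 0 x)) := by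
    intro x
    have hshift := insertNth_shift (0:Fin 2) (2*π) 0 x
    rw [sub_zero] at hshift
    rw [hshift, emb_shift0]
    exact gD_shift _ (fun y => (hper y).1) 0 _
  have hp1 : ∀ x : Fin 1 → ℝ,
      g2 1 (emb h ((1:Fin 2).insertNth (2*π) x)) = g2 1 (emb h ((1:Fin 2).insertNth 0 x)) := by
    intro x
    have hshift := insertNth_shift (1:Fin 2) (2*π) 0 x
    rw [sub_zero] at hshift
    rw [hshift, emb_shift1]
    exact gD_shift _ (fun y => (hper y).2) 1 _
  have hper2 : ∀ i : Fin 2, ∀ x : Fin 1 → ℝ,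
      g2 i (emb h (i.insertNth (2*π) x)) = g2 i (emb h (i.insertNth 0 x)) :=
    Fin.forall_fin_two.2 ⟨hp0, hp1⟩
  refine Finset.sum_eq_zero fun i _ => ?_
  rw [sub_eq_zero]
  exact setIntegral_congr_fun (measurableSet_Icc) fun x _ => hper2 i x

end Main5
section Conv

lemma sq2_pull (h : ℝ) (F : R3 → ℂ) :
    (∫ p in sq2, F (bpt p h))
      = ∫ y in Set.Icc (fun _ => (0:ℝ) : Fin 2 → ℝ) (fun _ => 2*π), F (emb h y) := by
  have hmp := volume_preserving_finTwoArrow ℝ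
  have hemb : MeasurableEmbedding (MeasurableEquiv.finTwoArrow (α := ℝ)) :=
    (MeasurableEquiv.finTwoArrow (α := ℝ)).measurableEmbedding
  rw [← hmp.setIntegral_preimage_emb hemb (fun p => F (bpt p h)) sq2]
  have h1 : (MeasurableEquiv.finTwoArrow (α := ℝ)) ⁻¹' sq2
      = Set.pi Set.univ (fun i : Fin 2 => Set.Ioo ((fun _ => (0:ℝ)) i) ((fun _ => 2*π) i)) := by
    ext y
    simp [sq2, MeasurableEquiv.finTwoArrow, Fin.forall_fin_two]
  have h2 : ∀ y : Fin 2 → ℝ, F (bpt (MeasurableEquiv.finTwoArrow y) h) = F (emb h y) := by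
    intro y; rfl
  rw [h1, setIntegral_congr_fun (MeasurableSet.univ_pi fun _ => measurableSet_Ioo)
    (fun y _ => h2 y)]
  refine setIntegral_congr_set ?_
  rw [MeasureTheory.volume_pi]
  exact MeasureTheory.Measure.univ_pi_Ioo_ae_eq_Icc

lemma omg_to_icc {E : Type*} [NormedAddCommGroup E] [NormedSpace ℝ E] (h : ℝ) (F : R3 → E) :
    (∫ x in Omg h, F x) = ∫ x in Set.Icc a0 (b0 h), F x := by
  have h1 : Omg h = Set.pi Set.univ (fun i => Set.Ioo (a0 i) (b0 h i)) := by
    ext x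
    simp only [Omg, Set.mem_setOf_eq, Set.mem_univ_pi]
    constructor
    · rintro ⟨h0, h1, h2⟩ i
      fin_cases i <;> simpa [a0, b0]
    · intro hx
      refine ⟨?_, ?_, ?_⟩
      · simpa [a0, b0] using hx 0
      · simpa [a0, b0] using hx 1
      · simpa [a0, b0] using hx 2
  rw [h1]
  refine setIntegral_congr_set ?_
  rw [MeasureTheory.volume_pi]
  exact MeasureTheory.Measure.univ_pi_Ioo_ae_eq_Icc

end Conv
/-- For every smooth biperiodic field `H` with `H₃ = 0` on `Γ₀`:
`∫_Ω (|curl_α H|² + |div_α H|²) dx = ∫_Ω |∇_α H|² dx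
  + 2 Re ∫_{Γ_h} (conj H₃ ∂^α H₁/∂x₁ + conj H₃ ∂^α H₂/∂x₂) ds`. -/
theorem curl_div_gradient_identity
    (h : ℝ) (hh : 0 < h) (α : R3) (hα : α 2 = 0)
    (H : R3 → C3) (hs : ContDiff ℝ (⊤ : ℕ∞) H) (hper : Biperiodic H)
    (hbc : ∀ x : R3, x 2 = 0 → H x 2 = 0) :
    (∫ x in Omg h, (nsq (curlA α H x) + Complex.normSq (divA α H x)))
      = (∫ x in Omg h, ∑ j, ∑ i, Complex.normSq (pdA α i (fun y => H y j) x))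
        + 2 * (∫ p in sq2,
            ((starRingEnd ℂ) (H (bpt p h) 2) * pdA α 0 (fun y => H y 0) (bpt p h)
              + (starRingEnd ℂ) (H (bpt p h) 2) * pdA α 1 (fun y => H y 1) (bpt p h))).re := by
  set S : R3 → ℂ := fun x => ∑ j, pdC j (Wf α H j) x with hSdef
  set Q : R3 → ℝ := fun x => ∑ j, ∑ i, Complex.normSq (pdA α i (fun y => H y j) x) with hQdef
  have hpt : ∀ x : R3, nsq (curlA α H x) + Complex.normSq (divA α H x)
      = Q x + (S x).re := by
    intro x
    have h1 := pointwise_id (α := α) hs x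
    have h2 : S x = (((nsq (curlA α H x) + Complex.normSq (divA α H x)) - Q x : ℝ) : ℂ) := by
      rw [Complex.ofReal_sub]
      simp only [hSdef, hQdef]
      linear_combination -h1
    have h3 : (S x).re = (nsq (curlA α H x) + Complex.normSq (divA α H x)) - Q x := by
      rw [h2, Complex.ofReal_re]
    linarith [h3]
  have hScont : Continuous S :=
    continuous_finset_sum _ fun j _ => (contDiff_pdC (smW hs j) j).continuous
  have hQcont : Continuous Q :=
    continuous_finset_sum _ fun j _ => continuous_finset_sum _ fun i _ =>
      Complex.continuous_normSq.comp (smPdA (smHc hs j) α i).continuous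
  have hSre : Continuous fun x : R3 => (S x).re := Complex.continuous_re.comp hScont
  have hBcont : Continuous fun y : Fin 2 → ℝ => Bf α H (emb h y) :=
    (smB hs).continuous.comp (sm_emb h).continuous
  have hBconj : Continuous fun y : Fin 2 → ℝ => (starRingEnd ℂ) (Bf α H (emb h y)) := by
    exact ((smConj (smB hs)).continuous).comp (sm_emb h).continuous
  have hGcont : Continuous fun y : Fin 2 → ℝ =>
      pdC 0 (gD H 0) (emb h y) + pdC 1 (gD H 1) (emb h y) :=
    ((contDiff_pdC (smgD hs 0) 0).continuous.comp (sm_emb h).continuous).add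
      ((contDiff_pdC (smgD hs 1) 1).continuous.comp (sm_emb h).continuous)
  -- move to the closed box
  rw [omg_to_icc h _, omg_to_icc h Q]
  rw [setIntegral_congr_fun measurableSet_Icc (fun x (_ : x ∈ Set.Icc a0 (b0 h)) => hpt x)]
  rw [integral_add (hQcont.integrableOn_Icc) (hSre.integrableOn_Icc)]
  congr 1
  -- handle the divergence part
  have hre : (∫ x in Set.Icc a0 (b0 h), (S x).re)
      = (∫ x in Set.Icc a0 (b0 h), S x).re := by
    have hint : IntegrableOn S (Set.Icc a0 (b0 h)) volume := hScont.integrableOn_Icc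
    simpa using integral_re hint
  have hW2 : ∀ y : Fin 2 → ℝ, Wf α H 2 ((2:Fin 3).insertNth h y)
      = Bf α H (emb h y) + (starRingEnd ℂ) (Bf α H (emb h y))
        - (pdC 0 (gD H 0) (emb h y) + pdC 1 (gD H 1) (emb h y)) := by
    intro y
    rw [emb_eq_insert, W2_split hs (emb h y)]
    ring
  have hTop : (∫ x in Set.Icc a0 (b0 h), S x)
      = (∫ y in Set.Icc (fun _ => (0:ℝ) : Fin 2 → ℝ) (fun _ => 2*π), Bf α H (emb h y))
        + (starRingEnd ℂ)
          (∫ y in Set.Icc (fun _ => (0:ℝ) : Fin 2 → ℝ) (fun _ => 2*π), Bf α H (emb h y)) := by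
    rw [hSdef, main_div hh hs hper hbc,
      setIntegral_congr_fun measurableSet_Icc (fun y _ => hW2 y),
      integral_sub (f := fun y => Bf α H (emb h y) + (starRingEnd ℂ) (Bf α H (emb h y))) ((hBcont.add hBconj).integrableOn_Icc)
        (hGcont.integrableOn_Icc),
      corr_zero hs hper, sub_zero,
      integral_add (hBcont.integrableOn_Icc)
        (hBconj.integrableOn_Icc),
      integral_conj]
  have hz := sq2_pull h (Bf α H)
  rw [hre, hTop, Complex.add_conj, Complex.ofReal_re, ← hz]
  rfl

end
end

section
/- For every differentiable field F : ℝ³ → ℂ³ the pointwise identity |curl_α F|² = |curl_{α,T} F_T|² + |curl⃗_{α,T} F₃|² + |∂F_T/∂x₃|² − 2 Re( conj(∇_{α,T} F₃) · ∂F_T/∂x₃ ) holds. -/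
open MeasureTheory Real

noncomputable section

/-! Since `α₃ = 0`, the shifted derivative `∂^α/∂x₃` is the plain `∂/∂x₃`, so
`curl_α F = (∂^α F₃/∂x₂ − ∂F₂/∂x₃, ∂F₁/∂x₃ − ∂^α F₃/∂x₁, curl_{α,T} F_T)`.
Expanding `|u − v|² = |u|² + |v|² − 2 Re(u v̄)` in the first two components gives the identity. -/

theorem pdA_eq_pdC {α : R3} {i : Fin 3} (hα : α i = 0) (f : R3 → ℂ) (x : R3) :
    pdA α i f x = pdC i f x := by
  simp [pdA, hα]

theorem curlA_eq_pdA (α : R3) (F : R3 → C3) (x : R3) :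
    curlA α F x =
      ![pdA α 1 (fun y => F y 2) x - pdA α 2 (fun y => F y 1) x,
        pdA α 2 (fun y => F y 0) x - pdA α 0 (fun y => F y 2) x,
        pdA α 0 (fun y => F y 1) x - pdA α 1 (fun y => F y 0) x] := by
  ext i
  fin_cases i <;>
    simp only [curlA, curlF, crossC, realToC3, pdA, Fin.isValue, Fin.zero_eta, Fin.mk_one,
      Fin.reduceFinMk, Pi.add_apply, Matrix.smul_cons, Matrix.smul_empty, Matrix.cons_val,
      Matrix.cons_val_zero, Matrix.cons_val_one, smul_eq_mul] <;> ring

theorem nsq_sub_sub_expand (a b p q c : ℂ) :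
    nsq ![b - q, p - a, c]
      = Complex.normSq c + nsq ![b, -a, 0] + nsq ![p, q, 0]
        - 2 * (dotp (conjV ![a, b, 0]) ![p, q, 0]).re := by
  simp only [nsq, dotp, conjV, Fin.sum_univ_three, Matrix.cons_val_zero, Matrix.cons_val_one,
    Matrix.cons_val_two, Matrix.head_cons, Matrix.tail_cons, Complex.normSq_sub,
    Complex.normSq_neg, map_zero, mul_zero, Complex.add_re, Complex.zero_re, Complex.mul_re,
    Complex.conj_re, Complex.conj_im]
  ring

theorem pointwise_curl_identity_general
    (α : R3) (hα : α 2 = 0) (F : R3 → C3) :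
    ∀ x : R3,
      nsq (curlA α F x)
      = Complex.normSq (pdA α 0 (fun y => F y 1) x - pdA α 1 (fun y => F y 0) x)
        + nsq ![pdA α 1 (fun y => F y 2) x, -(pdA α 0 (fun y => F y 2) x), 0]
        + nsq (vecT (pdV 2 F x))
        - 2 * (dotp (conjV ![pdA α 0 (fun y => F y 2) x, pdA α 1 (fun y => F y 2) x, 0])
            (vecT (pdV 2 F x))).re := by
  intro x
  rw [curlA_eq_pdA, pdA_eq_pdC hα, pdA_eq_pdC hα]
  exact nsq_sub_sub_expand _ _ _ _ _

/-- For every differentiable field `F : ℝ³ → ℂ³` the pointwise identity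
`|curl_α F|² = |curl_{α,T} F_T|² + |curl⃗_{α,T} F₃|² + |∂F_T/∂x₃|²
  − 2 Re(conj(∇_{α,T} F₃) · ∂F_T/∂x₃)` holds. -/
theorem pointwise_curl_identity
    (α : R3) (hα : α 2 = 0) (F : R3 → C3) (hF : Differentiable ℝ F) :
    ∀ x : R3,
      nsq (curlA α F x)
      = Complex.normSq (pdA α 0 (fun y => F y 1) x - pdA α 1 (fun y => F y 0) x)
        + nsq ![pdA α 1 (fun y => F y 2) x, -(pdA α 0 (fun y => F y 2) x), 0]
        + nsq (vecT (pdV 2 F x))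
        - 2 * (dotp (conjV ![pdA α 0 (fun y => F y 2) x, pdA α 1 (fun y => F y 2) x, 0])
            (vecT (pdV 2 F x))).re :=
  pointwise_curl_identity_general α hα F
end
end
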